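/- arXiv:2007.05269 — 6 statements merged into one kernel-verified Lean document; each statement's English description precedes it below -/
import Mathlib

section
/- For all words x, x', v over Σ: (a) if x'/v ≠ ε then x·(x'/v) = (x·x')/v; and (b) if |x'| > |v| then x'/v ≠ ε. -/
open List
/-- `wpow u k` is the word `u` concatenated `k` times. -/
def wpow {β : Type*} (u : List β) (k : ℕ) : List β := (List.replicate k u).flatten

/-- Auxiliary residual operation, working on reversed words. -/
def resAux {α : Type*} [DecidableEq α] : List α → List α → List α
  | xr, [] => xr
  | [], _ :: _ => []
  | a :: xr, b :: vr => if a = b then resAux xr vr else resAux (a :: xr) vr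
termination_by xr vr => vr.length

/-- The residual `x / v`: the prefix of `x` obtained by removing from `x`
its longest suffix that is a subword of `v`. -/
def res {α : Type*} [DecidableEq α] (x v : List α) : List α :=
  (resAux x.reverse v.reverse).reverse

inductive Act (α : Type*) where
  | write : List α → Act α
  | read : List α → Act α

/-- written part -/
def wri {α : Type*} : List (Act α) → List α
  | [] => []
  | Act.write w :: σ => w ++ wri σ
  | Act.read _ :: σ => wri σ

/-- read part -/
def rea {α : Type*} : List (Act α) → List α
  | [] => []
  | Act.write _ :: σ => rea σ
  | Act.read w :: σ => w ++ rea σ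

/-- `pr σ x` : minimal `σ`-predecessor of `x` (processing `σ` right-to-left). -/
def pr {α : Type*} [DecidableEq α] : List (Act α) → List α → List α
  | [], x => x
  | Act.write v :: σ, x => res (pr σ x) v
  | Act.read u :: σ, x => u ++ pr σ x

/-- lossy step for a single channel action -/
def stepAct {α : Type*} : Act α → List α → List α → Prop
  | Act.write w, x, y => y <+ x ++ w
  | Act.read w, x, y => w ++ y <+ x

/-- lossy steps along a sequence of channel actions -/
def steps {α : Type*} : List (Act α) → List α → List α → Prop
  | [], x, y => x = y
  | θ :: σ, x, y => ∃ z, stepAct θ x z ∧ steps σ z y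

/-- `w` is a fractional power of `u` -/
def FracPow {α : Type*} (u w : List α) : Prop := ∃ k : ℕ, w <+: wpow u k

/-- `x ⊖ u` : remainder of `x` after reading the leftmost embedding of `u`. -/
def ominus {α : Type*} [DecidableEq α] : List α → List α → List α
  | x, [] => x
  | [], _ :: _ => []
  | a :: x, b :: u => if a = b then ominus x u else ominus x (b :: u)

/-- `σ` is increasing -/
def Increasing {α : Type*} (σ : List (Act α)) : Prop :=
  0 < (wri σ).length ∧
    wpow (rea σ) (wri σ).length <+ wpow (wri σ) ((wri σ).length - 1)

/-! Working on reversed words, `resAux` removes letters only from the front of its first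
argument, and each removed letter consumes a letter of the second. Hence a nonempty result
leaves any appended tail untouched, and at most `|v|` letters of `x` are removed. -/

section
variable {α : Type*} [DecidableEq α]

theorem resAux_append {xr vr : List α} (h : resAux xr vr ≠ []) (ys : List α) :
    resAux (xr ++ ys) vr = resAux xr vr ++ ys := by
  fun_induction resAux xr vr <;> simp_all [resAux]

theorem length_le_length_resAux_add (xr vr : List α) :
    xr.length ≤ (resAux xr vr).length + vr.length := by
  fun_induction resAux xr vr <;> grind

theorem length_le_length_res_add (x v : List α) : x.length ≤ (res x v).length + v.length := by
  simpa [res] using length_le_length_resAux_add x.reverse v.reverse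

theorem res_ne_nil_of_length_lt {x v : List α} (h : v.length < x.length) : res x v ≠ [] := by
  have hlen := length_le_length_res_add x v
  rintro hnil
  simp only [hnil, length_nil] at hlen
  omega

theorem append_res_of_res_ne_nil (x : List α) {x' v : List α} (h : res x' v ≠ []) :
    x ++ res x' v = res (x ++ x') v := by
  rw [res, ne_eq, reverse_eq_nil_iff] at h
  simp [res, resAux_append h]
end

/-- (a) if `x'/v ≠ ε` then `x·(x'/v) = (x·x')/v`;
(b) if `|x'| > |v|` then `x'/v ≠ ε`. -/
theorem residual_append_and_nonempty {α : Type*} [DecidableEq α]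
    (x x' v : List α) :
    (res x' v ≠ [] → x ++ res x' v = res (x ++ x') v) ∧
    (v.length < x'.length → res x' v ≠ []) :=
  ⟨append_res_of_res_ne_nil x, res_ne_nil_of_length_lt⟩
end

section
/- The residual operation is monotonic in its first argument and contramonotonic in its second argument: for all words u, u', v, v', x over Σ, if u ⊑ u' then u/v ⊑ u'/v, and if v ⊑ v' then x/v' ⊑ x/v. -/
open List
/-!
On reversed words, `resAux` scans `v` letter by letter and drops the current first letter of
`x` whenever the two match. Both claims follow by induction on `v` from two one-letter facts:
prepending a letter to `x` and deleting a letter from `v` can each only enlarge the result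
with respect to `<+`.
-/

section

variable {α : Type*} [DecidableEq α]

@[simp]
lemma resAux_nil_right (xr : List α) : resAux xr [] = xr := by
  cases xr <;> rw [resAux]

@[simp]
lemma resAux_nil_left (b : α) (vr : List α) : resAux [] (b :: vr) = [] := by
  rw [resAux]

lemma resAux_cons_cons (a b : α) (xr vr : List α) :
    resAux (a :: xr) (b :: vr) = if a = b then resAux xr vr else resAux (a :: xr) vr := by
  rw [resAux]

lemma resAux_sublist_cons_left (vr : List α) :
    ∀ (a : α) (xr : List α), resAux xr vr <+ resAux (a :: xr) vr := by
  induction vr with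
  | nil => intro a xr; simp
  | cons b vr ih =>
    rintro a (_ | ⟨c, xr⟩)
    · simp
    · rw [resAux_cons_cons, resAux_cons_cons]
      split_ifs
      · exact ih c xr
      · exact (ih c xr).trans (ih a (c :: xr))
      · exact Sublist.refl _
      · exact ih a (c :: xr)

lemma resAux_cons_right_sublist (b : α) (xr vr : List α) :
    resAux xr (b :: vr) <+ resAux xr vr := by
  rcases xr with _ | ⟨a, xr⟩
  · simp
  · rw [resAux_cons_cons]
    split_ifs
    · exact resAux_sublist_cons_left vr a xr
    · exact Sublist.refl _

lemma resAux_mono_left (vr : List α) :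
    ∀ {ur ur' : List α}, ur <+ ur' → resAux ur vr <+ resAux ur' vr := by
  induction vr with
  | nil => intro ur ur' h; simpa using h
  | cons b vr ih =>
    intro ur ur' h
    cases h with
    | slnil => exact Sublist.refl _
    | @cons ur t a h =>
      refine (resAux_cons_right_sublist b ur vr).trans ?_
      rw [resAux_cons_cons]
      split_ifs
      · exact ih h
      · exact ih (h.cons a)
    | @cons_cons s t a h =>
      rw [resAux_cons_cons, resAux_cons_cons]
      split_ifs
      · exact ih h
      · exact ih (h.cons_cons a)

lemma resAux_anti_right {vr vr' : List α} (h : vr <+ vr') (xr : List α) :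
    resAux xr vr' <+ resAux xr vr := by
  induction h generalizing xr with
  | slnil => exact Sublist.refl _
  | cons b _ ih => exact (resAux_cons_right_sublist b xr _).trans (ih xr)
  | cons_cons b _ ih =>
    rcases xr with _ | ⟨a, xr⟩
    · simp
    · rw [resAux_cons_cons, resAux_cons_cons]
      split_ifs
      · exact ih xr
      · exact ih (a :: xr)

lemma res_mono_left {u u' : List α} (h : u <+ u') (v : List α) :
    res u v <+ res u' v :=
  (resAux_mono_left _ h.reverse).reverse

lemma res_anti_right (x : List α) {v v' : List α} (h : v <+ v') :
    res x v' <+ res x v :=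
  (resAux_anti_right h.reverse _).reverse

end

/-- the residual is monotonic in its first argument and
contramonotonic in its second argument. -/
theorem residual_mono {α : Type*} [DecidableEq α]
    (u u' v v' x : List α) :
    (u <+ u' → res u v <+ res u' v) ∧ (v <+ v' → res x v' <+ res x v) :=
  ⟨fun h => res_mono_left h v, res_anti_right x⟩
end

section
/- Correctness of the backward-reachability operator pr: for every sequence of channel actions σ over Σ and all words x, y, one has pr[σ](x) ⊑ y if and only if there exists a word z with y →^σ z and x ⊑ z. In other words, the set of σ-predecessors of the upward closure of x is exactly the upward closure of pr[σ](x). -/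
open List
/-!
The operator `pr` is built one action at a time, and for a single action `θ` the set of words
from which `θ` can reach a superword of `w` is again the upward closure of one word. For a read
`?u` this word is `u ++ w`; for a write `!v` it is the residual `w / v`, because `res · v` is left
adjoint to `· ++ v` for the subword order. Composing these one-step facts along `σ` gives the
theorem.
-/

section Predecessor

variable {α : Type*} [DecidableEq α]

theorem resAux_sublist_iff (xr vr w : List α) : resAux xr vr <+ w ↔ xr <+ vr ++ w := by
  induction xr, vr using resAux.induct with
  | case1 => simp [resAux]
  | case2 => simp [resAux]
  | case3 xr b vr ih =>
    rw [resAux, if_pos rfl]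
    simpa using ih
  | case4 a xr b vr hab ih =>
    rw [resAux, if_neg hab, ih]
    constructor
    · exact fun h => h.cons b
    · rintro (⟨_, h⟩ | ⟨_, h⟩)
      · exact h
      · exact absurd rfl hab

theorem res_sublist_iff (x v y : List α) : res x v <+ y ↔ x <+ y ++ v := by
  rw [res, ← reverse_sublist, reverse_reverse, resAux_sublist_iff, ← reverse_append,
    reverse_sublist]

def prAct : Act α → List α → List α
  | Act.write v, x => res x v
  | Act.read u, x => u ++ x

theorem pr_cons (θ : Act α) (σ : List (Act α)) (x : List α) :
    pr (θ :: σ) x = prAct θ (pr σ x) := by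
  cases θ <;> rfl

theorem prAct_sublist_iff (θ : Act α) (w y : List α) :
    prAct θ w <+ y ↔ ∃ z, stepAct θ y z ∧ w <+ z := by
  cases θ with
  | write v =>
    rw [prAct, res_sublist_iff]
    exact ⟨fun h => ⟨y ++ v, Sublist.refl _, h⟩, fun ⟨z, hz, hw⟩ => hw.trans hz⟩
  | read u =>
    exact ⟨fun h => ⟨w, h, Sublist.refl _⟩, fun ⟨z, hz, hw⟩ => (hw.append_left u).trans hz⟩

end Predecessor

/-- correctness of the backward-reachability operator `pr`:
`pr[σ](x) ⊑ y` iff some `z ⊒ x` satisfies `y →^σ z`. -/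
theorem pr_correct {α : Type*} [DecidableEq α]
    (σ : List (Act α)) (x y : List α) :
    pr σ x <+ y ↔ ∃ z : List α, steps σ y z ∧ x <+ z := by
  induction σ generalizing y with
  | nil => simp [pr, steps]
  | cons θ σ ih =>
    rw [pr_cons, prAct_sublist_iff]
    simp only [steps, ih]
    exact ⟨fun ⟨z', hstep, z, hsteps, hx⟩ => ⟨z, ⟨z', hstep, hsteps⟩, hx⟩,
      fun ⟨z, ⟨z', hstep, hsteps⟩, hx⟩ => ⟨z', hstep, z, hsteps, hx⟩⟩
end

section
/- Let σ be a sequence of channel actions over Σ and let u = rea(σ). If the word x is a fractional power of u, then pr[σ](x) is also a fractional power of u. -/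
open List
/-!
Residuals `x / v` are prefixes of `x` and reads prepend their word, so `pr[σ](x)` is a
prefix of `rea(σ) · x`. If `x` is a prefix of `u^k` with `u = rea(σ)`, then `u · x` is a
prefix of `u^(k+1)`.
-/

lemma resAux_suffix {α : Type*} [DecidableEq α] (xr vr : List α) : resAux xr vr <:+ xr := by
  induction vr generalizing xr with
  | nil => cases xr <;> simp [resAux]
  | cons b vr ih =>
    cases xr with
    | nil => simp [resAux]
    | cons a xr =>
      simp only [resAux]
      split
      · exact (ih xr).trans (List.suffix_cons a xr)
      · exact ih (a :: xr)

lemma res_prefix {α : Type*} [DecidableEq α] (x v : List α) : res x v <+: x := by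
  simpa [res] using List.reverse_prefix.2 (resAux_suffix x.reverse v.reverse)

lemma pr_prefix_rea_append {α : Type*} [DecidableEq α] (σ : List (Act α)) (x : List α) :
    pr σ x <+: rea σ ++ x := by
  induction σ with
  | nil => simp [pr, rea]
  | cons θ σ ih =>
    cases θ with
    | write v => exact (res_prefix _ v).trans ih
    | read w => simpa only [pr, rea, List.append_assoc] using (List.prefix_append_right_inj w).2 ih

lemma wpow_succ {β : Type*} (u : List β) (k : ℕ) : wpow u (k + 1) = u ++ wpow u k := by
  simp only [wpow, List.replicate_succ, List.flatten_cons]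

lemma FracPow.of_prefix {α : Type*} {u w w' : List α} (h : FracPow u w) (hw : w' <+: w) :
    FracPow u w' :=
  let ⟨k, hk⟩ := h
  ⟨k, hw.trans hk⟩

lemma FracPow.append_left {α : Type*} {u w : List α} (h : FracPow u w) : FracPow u (u ++ w) :=
  let ⟨k, hk⟩ := h
  ⟨k + 1, wpow_succ u k ▸ (List.prefix_append_right_inj u).2 hk⟩

/-- if `x` is a fractional power of `u = rea(σ)` then so is `pr[σ](x)`. -/
theorem pr_fracPow {α : Type*} [DecidableEq α]
    (σ : List (Act α)) (x : List α) (h : FracPow (rea σ) x) :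
    FracPow (rea σ) (pr σ x) :=
  h.append_left.of_prefix (pr_prefix_rea_append σ x)
end

section
/- Let σ be a sequence of channel actions over Σ and x a word, and suppose L ∈ ℕ and ℓ ≤ L satisfy pr[σ^ℓ](x) ⊑ pr[σ^{L+1}](x). Then for every k ∈ ℕ there exists i ≤ L with pr[σ^i](x) ⊑ pr[σ^k](x); consequently the union over all k ∈ ℕ of the upward closures of pr[σ^k](x) equals the finite union over i ≤ L of the upward closures of pr[σ^i](x). -/
open List
/-!
`pr[σ^k](x)` is the `k`-th iterate of `pr[σ]` at `x`, and `pr[σ]` is monotone for the subword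
order. Hence the hypothesis `pr[σ^ℓ](x) ⊑ pr[σ^{L+1}](x)` propagates along the orbit:
`pr[σ^{ℓ+j}](x) ⊑ pr[σ^{L+1+j}](x)` for every `j`, so every term of index `> L` is above a term
of smaller index, and by strong induction above one of index `≤ L`.
-/

section Orbit

variable {β : Type*} {r : β → β → Prop} {f : β → β}

theorem rel_iterate_of_rel (hf : ∀ a b, r a b → r (f a) (f b)) {a b : β} (h : r a b) (n : ℕ) :
    r (f^[n] a) (f^[n] b) := by
  induction n with
  | zero => exact h
  | succ n ih => simpa only [Function.iterate_succ_apply'] using hf _ _ ih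

theorem exists_rel_iterate_of_rel_iterate_succ [Std.Refl r] [IsTrans β r]
    (hf : ∀ a b, r a b → r (f a) (f b)) {x : β} {ℓ L : ℕ} (hl : ℓ ≤ L)
    (h : r (f^[ℓ] x) (f^[L + 1] x)) (k : ℕ) : ∃ i ≤ L, r (f^[i] x) (f^[k] x) := by
  induction k using Nat.strong_induction_on with
  | _ k ih =>
    by_cases hk : k ≤ L
    · exact ⟨k, hk, refl _⟩
    obtain ⟨j, rfl⟩ : ∃ j, k = j + (L + 1) := ⟨k - (L + 1), by omega⟩
    obtain ⟨i, hi, hrel⟩ := ih (j + ℓ) (by omega)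
    refine ⟨i, hi, _root_.trans hrel ?_⟩
    simpa only [Function.iterate_add_apply] using rel_iterate_of_rel hf h j

end Orbit

instance {α : Type*} : Std.Refl (α := List α) List.Sublist := ⟨List.Sublist.refl⟩

section Predecessor

variable {α : Type*} [DecidableEq α]

theorem resAux_sublist_resAux (vr : List α) :
    ∀ {xr xr' : List α}, xr <+ xr' → resAux xr vr <+ resAux xr' vr := by
  induction vr with
  | nil => intro xr xr' h; simpa only [resAux] using h
  | cons b vr ih =>
    have letter_shrinks : ∀ a t, resAux (a :: t) (b :: vr) <+ resAux (a :: t) vr := fun a t => by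
      rw [resAux]; split_ifs
      exacts [ih (List.sublist_cons_self a t), .refl _]
    have head_shrinks : ∀ a t, resAux t vr <+ resAux (a :: t) (b :: vr) := fun a t => by
      rw [resAux]; split_ifs
      exacts [.refl _, ih (List.sublist_cons_self a t)]
    rintro (_ | ⟨a, t⟩) xr' h
    · simp only [resAux, List.nil_sublist]
    cases h with
    | cons a' h => exact (letter_shrinks a t).trans ((ih h).trans (head_shrinks a' _))
    | cons_cons _ h =>
      simp only [resAux]
      split_ifs
      exacts [ih h, ih (h.cons_cons a)]

theorem res_sublist_res {x x' : List α} (v : List α) (h : x <+ x') : res x v <+ res x' v :=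
  (resAux_sublist_resAux v.reverse h.reverse).reverse

theorem pr_sublist_pr (σ : List (Act α)) {y y' : List α} (h : y <+ y') : pr σ y <+ pr σ y' := by
  induction σ with
  | nil => exact h
  | cons θ σ ih =>
    cases θ with
    | write v => exact res_sublist_res v ih
    | read u => exact ih.append_left u

theorem pr_append (σ₁ σ₂ : List (Act α)) (x : List α) : pr (σ₁ ++ σ₂) x = pr σ₁ (pr σ₂ x) := by
  induction σ₁ with
  | nil => rfl
  | cons θ σ ih => cases θ <;> simp only [List.cons_append, pr, ih]

theorem pr_wpow (σ : List (Act α)) (k : ℕ) (x : List α) : pr (wpow σ k) x = (pr σ)^[k] x := by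
  induction k with
  | zero => rfl
  | succ k ih =>
    rw [Function.iterate_succ_apply', ← ih, ← pr_append]
    simp only [wpow, List.replicate_succ, List.flatten_cons]

end Predecessor

/-- if `pr[σ^ℓ](x) ⊑ pr[σ^{L+1}](x)` for some `ℓ ≤ L`, then every
`pr[σ^k](x)` is above some `pr[σ^i](x)` with `i ≤ L`, and the union of the upward
closures of the `pr[σ^k](x)` equals the finite union over `i ≤ L`. -/
theorem fixpoint_after_L {α : Type*} [DecidableEq α]
    (σ : List (Act α)) (x : List α) (L ℓ : ℕ) (hl : ℓ ≤ L)
    (h : pr (wpow σ ℓ) x <+ pr (wpow σ (L + 1)) x) :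
    (∀ k : ℕ, ∃ i ≤ L, pr (wpow σ i) x <+ pr (wpow σ k) x) ∧
    (⋃ k : ℕ, {y : List α | pr (wpow σ k) x <+ y}) =
      ⋃ i ≤ L, {y : List α | pr (wpow σ i) x <+ y} := by
  simp only [pr_wpow] at h ⊢
  have dominated := exists_rel_iterate_of_rel_iterate_succ
    (fun _ _ => pr_sublist_pr σ) hl h
  refine ⟨dominated, Set.Subset.antisymm ?_ ?_⟩
  · refine Set.iUnion_subset fun k y hy => ?_
    obtain ⟨i, hi, hik⟩ := dominated k
    exact Set.mem_biUnion hi (hik.trans hy)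
  · exact Set.iUnion₂_subset fun i _ y hy => Set.mem_iUnion.mpr ⟨i, hy⟩
end

section
/- Forward characterisation of lossy runs: for every sequence of channel actions σ over Σ and all words x, y, the following are equivalent: (1) there exists x' ⊑ x with x' →^σ y; (2) σ is enabled from x (i.e., there exists z with x →^σ z), rea(σ) ⊑ x·wri(σ), and y ⊑ (x·wri(σ)) ⊖ rea(σ). -/
open List
/-!
Both sides obey the same recursion along `σ`: a write `!w` turns `x` into `x·w`, and a read
`?u` demands `u ⊑ x` and turns `x` into `x ⊖ u`. For reads the key fact is that, once `u ⊑ x`,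
`u·v ⊑ x ↔ v ⊑ x ⊖ u`: the leftmost embedding of `u` leaves the largest remainder. Enabledness
is upward closed under `⊑`, so on both sides the lossy choices can be taken maximal.
-/

section Ominus
variable {α : Type*} [DecidableEq α]

theorem append_ominus_of_sublist (w : List α) {x u : List α} (h : u <+ x) :
    ominus (x ++ w) u = ominus x u ++ w := by
  induction x, u using ominus.induct with
  | case1 => simp [ominus]
  | case2 => simp at h
  | case3 x b u ih => simp [ominus, ih (cons_sublist_cons.mp h)]
  | case4 a x b u hab ih => simp [ominus, hab, ih (h.of_cons_of_ne (Ne.symm hab))]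

theorem ominus_append_of_sublist (v : List α) {x u : List α} (h : u <+ x) :
    ominus x (u ++ v) = ominus (ominus x u) v := by
  induction x, u using ominus.induct with
  | case1 => simp [ominus]
  | case2 => simp at h
  | case3 x b u ih => simp [ominus, ih (cons_sublist_cons.mp h)]
  | case4 a x b u hab ih => simpa [ominus, hab] using ih (h.of_cons_of_ne (Ne.symm hab))

theorem sublist_ominus_of_append_sublist {x u v : List α} (h : u ++ v <+ x) :
    v <+ ominus x u := by
  induction x, u using ominus.induct with
  | case1 => simpa [ominus] using h
  | case2 => simp at h
  | case3 x b u ih => simpa [ominus] using ih (cons_sublist_cons.mp h)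
  | case4 a x b u hab ih => simpa [ominus, hab] using ih (h.of_cons_of_ne (Ne.symm hab))

theorem append_ominus_self_sublist {x u : List α} (h : u <+ x) : u ++ ominus x u <+ x := by
  induction x, u using ominus.induct with
  | case1 => simp [ominus]
  | case2 => simp at h
  | case3 x b u ih => simpa [ominus] using ih (cons_sublist_cons.mp h)
  | case4 a x b u hab ih =>
    simpa [ominus, hab] using (ih (h.of_cons_of_ne (Ne.symm hab))).cons a

theorem append_sublist_iff_sublist_ominus {x u v : List α} (h : u <+ x) :
    u ++ v <+ x ↔ v <+ ominus x u :=
  ⟨sublist_ominus_of_append_sublist,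
    fun hv => (hv.append_left u).trans (append_ominus_self_sublist h)⟩

theorem exists_append_sublist_iff {P : List α → Prop} {x u : List α} :
    (∃ t, u ++ t <+ x ∧ P t) ↔ u <+ x ∧ ∃ t, t <+ ominus x u ∧ P t := by
  constructor
  · rintro ⟨t, ht, hP⟩
    have hu : u <+ x := (sublist_append_left u t).trans ht
    exact ⟨hu, t, (append_sublist_iff_sublist_ominus hu).mp ht, hP⟩
  · rintro ⟨hu, t, ht, hP⟩
    exact ⟨t, (append_sublist_iff_sublist_ominus hu).mpr ht, hP⟩

end Ominus

theorem exists_sublist_iff_of_monotone {α : Type*} {P : List α → Prop}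
    (hP : ∀ ⦃s t⦄, s <+ t → P s → P t) {x : List α} : (∃ s, s <+ x ∧ P s) ↔ P x :=
  ⟨fun ⟨_, hs, hPs⟩ => hP hs hPs, fun hPx => ⟨x, Sublist.refl x, hPx⟩⟩

section Steps
variable {α : Type*}

theorem exists_steps_of_sublist {σ : List (Act α)} {s t y : List α} (h : steps σ s y)
    (hst : s <+ t) : ∃ z, steps σ t z := by
  match σ, h with
  | [], _ => exact ⟨t, rfl⟩
  | .write _ :: _, ⟨z, hz, h⟩ => exact ⟨y, z, hz.trans (hst.append_right _), h⟩
  | .read _ :: _, ⟨z, hz, h⟩ => exact ⟨y, z, hz.trans hst, h⟩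

theorem exists_sublist_exists_steps_iff {σ : List (Act α)} {x : List α} :
    (∃ s, s <+ x ∧ ∃ z, steps σ s z) ↔ ∃ z, steps σ x z :=
  exists_sublist_iff_of_monotone fun _ _ hst ⟨_, h⟩ => exists_steps_of_sublist h hst

theorem exists_steps_write_cons_iff {σ : List (Act α)} {x w : List α} :
    (∃ z, steps (.write w :: σ) x z) ↔ ∃ z, steps σ (x ++ w) z := by
  simp only [steps, stepAct]
  rw [exists_comm]
  simp only [exists_and_left]
  exact exists_sublist_exists_steps_iff

theorem exists_steps_read_cons_iff [DecidableEq α] {σ : List (Act α)} {x u : List α} :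
    (∃ z, steps (.read u :: σ) x z) ↔ u <+ x ∧ ∃ z, steps σ (ominus x u) z := by
  simp only [steps, stepAct]
  rw [exists_comm]
  simp only [exists_and_left]
  rw [exists_append_sublist_iff, exists_sublist_exists_steps_iff]

theorem exists_sublist_steps_write_cons_iff {σ : List (Act α)} {x y w : List α} :
    (∃ s, s <+ x ∧ steps (.write w :: σ) s y) ↔ ∃ s, s <+ x ++ w ∧ steps σ s y :=
  exists_sublist_iff_of_monotone fun _ _ hst ⟨z, hz, h⟩ => ⟨z, hz.trans (hst.append_right _), h⟩

theorem exists_sublist_steps_read_cons_iff [DecidableEq α] {σ : List (Act α)} {x y u : List α} :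
    (∃ s, s <+ x ∧ steps (.read u :: σ) s y) ↔ u <+ x ∧ ∃ s, s <+ ominus x u ∧ steps σ s y := by
  rw [← exists_append_sublist_iff]
  exact exists_sublist_iff_of_monotone fun _ _ hst ⟨z, hz, h⟩ => ⟨z, hz.trans hst, h⟩

end Steps

/-- forward characterisation of lossy runs:
`∃ x' ⊑ x, x' →^σ y` iff `σ` is enabled from `x`, `rea(σ) ⊑ x·wri(σ)` and
`y ⊑ (x·wri(σ)) ⊖ rea(σ)`. -/
theorem steps_iff_ominus {α : Type*} [DecidableEq α]
    (σ : List (Act α)) (x y : List α) :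
    (∃ x' : List α, x' <+ x ∧ steps σ x' y) ↔
    ((∃ z : List α, steps σ x z) ∧ rea σ <+ x ++ wri σ ∧
      y <+ ominus (x ++ wri σ) (rea σ)) := by
  induction σ generalizing x with
  | nil => simp [steps, wri, rea, ominus]
  | cons θ σ ih =>
    cases θ with
    | write w =>
      rw [exists_sublist_steps_write_cons_iff, exists_steps_write_cons_iff, ih]
      simp only [wri, rea, append_assoc]
    | read u =>
      rw [exists_sublist_steps_read_cons_iff, exists_steps_read_cons_iff, ih, and_assoc]
      refine and_congr_right fun hu => and_congr_right' ?_
      have hu' : u <+ x ++ wri σ := hu.trans (sublist_append_left x _)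
      simp only [wri, rea]
      rw [append_sublist_iff_sublist_ominus hu', ominus_append_of_sublist _ hu',
        append_ominus_of_sublist _ hu]
end
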